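/- Each of the seven 6×6 matrices E_q (q = 0,…,6) with entries (E_q)_{ij} = e_{6+i-4j+q} (indices outside {0,…,6} giving 0), where e₀ = 1/144, e₁ = 11/72, e₂ = 23/144, e₃ = 121/36, e₄ = 23/144, e₅ = 11/72, e₆ = 1/144, has spectral radius at most 3.3756 and the matrices E₀, E₃, E₆ each have 121/36 as an eigenvalue. -/
import Mathlib

open Finset in
lemma gersh_abs {A : Matrix (Fin 6) (Fin 6) ℝ} {z : ℝ} (hz : z ∈ spectrum ℝ A) :
    ∃ i, |z| ≤ ∑ j, |A i j| := by
  rw [← AlgEquiv.spectrum_eq (Matrix.toLinAlgEquiv' (R := ℝ) (n := Fin 6)) A] at hz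
  have hev : Module.End.HasEigenvalue (Matrix.toLin' A) z :=
    Module.End.hasEigenvalue_iff_mem_spectrum.mpr hz
  obtain ⟨i, hi⟩ := eigenvalue_mem_ball hev
  refine ⟨i, ?_⟩
  rw [Metric.mem_closedBall, Real.dist_eq] at hi
  have h2 : ∑ j, |A i j| = |A i i| + ∑ j ∈ univ.erase i, |A i j| :=
    (Finset.add_sum_erase _ _ (mem_univ i)).symm
  have h3 : ∑ j ∈ univ.erase i, ‖A i j‖ = ∑ j ∈ univ.erase i, |A i j| := rfl
  rw [h3] at hi
  linarith [abs_sub_abs_le_abs_sub z (A i i)]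

theorem quaternary_E_matrices_spectrum :
    let e : ℤ → ℝ := fun k =>
      if k = 0 then 1/144 else if k = 1 then 11/72 else if k = 2 then 23/144 else
      if k = 3 then 121/36 else if k = 4 then 23/144 else if k = 5 then 11/72 else
      if k = 6 then 1/144 else 0
    let E : ℤ → Matrix (Fin 6) (Fin 6) ℝ := fun q =>
      Matrix.of fun i j => e (6 + ((i : ℤ) + 1) - 4 * ((j : ℤ) + 1) + q)
    (∀ q : ℤ, 0 ≤ q → q ≤ 6 → ∀ z ∈ spectrum ℝ (E q), |z| ≤ 3.3756) ∧
    (121/36 : ℝ) ∈ spectrum ℝ (E 0) ∧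
    (121/36 : ℝ) ∈ spectrum ℝ (E 3) ∧
    (121/36 : ℝ) ∈ spectrum ℝ (E 6) := by
  intro e E
  have hmem : ∀ q : ℤ, ∀ r : Fin 6, (∀ j, E q r j = if j = r then 121/36 else 0) →
      (121/36 : ℝ) ∈ spectrum ℝ (E q) := by
    intro q r hr
    rw [spectrum.mem_iff]
    intro h
    rw [Matrix.isUnit_iff_isUnit_det] at h
    rw [Matrix.det_eq_zero_of_row_eq_zero r ?_] at h
    · exact not_isUnit_zero h
    · intro j
      rw [Matrix.sub_apply, hr j, Matrix.algebraMap_eq_diagonal, Matrix.diagonal_apply,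
        Pi.algebraMap_apply]
      by_cases hj : j = r <;> simp [hj, Ne.symm]
  refine ⟨?_, ?_, ?_, ?_⟩
  · intro q hq0 hq6 z hz
    obtain ⟨i, hi⟩ := gersh_abs hz
    refine hi.trans ?_
    interval_cases q <;> fin_cases i <;>
      (simp (config := { decide := true }) only [E, e, Matrix.of_apply, Fin.sum_univ_six] <;>
        norm_num [abs_of_nonneg])
  · refine hmem 0 0 ?_
    intro j; fin_cases j <;>
      simp (config := { decide := true }) only [E, e, Matrix.of_apply] <;> norm_num
  · refine hmem 3 1 ?_
    intro j; fin_cases j <;>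
      simp (config := { decide := true }) only [E, e, Matrix.of_apply] <;> norm_num
  · refine hmem 6 2 ?_
    intro j; fin_cases j <;>
      simp (config := { decide := true }) only [E, e, Matrix.of_apply] <;> norm_num
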